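/- arXiv:1405.5489 — 8 statements merged into one kernel-verified Lean document; each statement's English description precedes it below -/
import Mathlib

section
/- Suppose M > 0, N > 0 and δ₁/K₀ > δ₂. Then the transcendental equation G(M,p,y) = y + N·y³ has at least one solution ξ with 0 < ξ < √(B/(A·M)). -/
open Real MeasureTheory Filter Set

/-- `g p y = ∫₀^y exp(−r² + p·r·y) dr`. -/
noncomputable def g (p y : ℝ) : ℝ := ∫ r in (0:ℝ)..y, Real.exp (-r^2 + p*r*y)

/-- Complementary error function `erfc z = (2/√π)∫_z^∞ exp(−r²) dr`. -/
noncomputable def erfc (z : ℝ) : ℝ := (2 / Real.sqrt π) * ∫ r in Set.Ioi z, Real.exp (-r^2)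

/-- `G₁(p,y) = exp((p−1)y²)/(K₀ + g(p,y))`. -/
noncomputable def G₁ (K₀ p y : ℝ) : ℝ := Real.exp ((p-1)*y^2) / (K₀ + g p y)

/-- `G₂(y) = exp(−γ₀²y²)/erfc(γ₀y)`. -/
noncomputable def G₂ (γ₀ y : ℝ) : ℝ := Real.exp (-(γ₀^2*y^2)) / erfc (γ₀*y)

/-- `G(M,p,y) = δ₁(1 − (A·M/B)y²)G₁(p,y) − δ₂(1 + M·y²)G₂(y)`. -/
noncomputable def Gfun (A B δ₁ δ₂ K₀ γ₀ M p y : ℝ) : ℝ :=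
  δ₁ * (1 - A*M/B * y^2) * G₁ K₀ p y - δ₂ * (1 + M*y^2) * G₂ γ₀ y

lemma int_exp : Integrable (fun r : ℝ => Real.exp (-r^2)) := by
  have := integrable_exp_neg_mul_sq (one_pos)
  simpa using this

lemma erfc_pos (z : ℝ) : 0 < erfc z := by
  have h1 : 0 < ∫ r in Set.Ioi z, Real.exp (-r^2) := by
    rw [setIntegral_pos_iff_support_of_nonneg_ae]
    · have : Function.support (fun r : ℝ => Real.exp (-r^2)) = Set.univ := by
        ext x; simp [Function.support, (Real.exp_pos _).ne']
      rw [this]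
      simp [Measure.restrict_apply, MeasurableSet.univ]
    · filter_upwards with x using (Real.exp_pos _).le
    · exact int_exp.integrableOn
  exact mul_pos (by positivity) h1

lemma erfc_eq (z : ℝ) : erfc z = (2 / Real.sqrt π) *
    ((∫ r in Set.Ioi (0:ℝ), Real.exp (-r^2)) - ∫ r in (0:ℝ)..z, Real.exp (-r^2)) := by
  unfold erfc
  congr 1
  rcases le_or_gt 0 z with hz | hz
  · rw [intervalIntegral.integral_of_le hz, ← Ioc_union_Ioi_eq_Ioi hz,
      setIntegral_union (Ioc_disjoint_Ioi le_rfl) measurableSet_Ioi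
        int_exp.integrableOn int_exp.integrableOn]
    ring
  · rw [intervalIntegral.integral_of_ge hz.le, ← Ioc_union_Ioi_eq_Ioi hz.le,
      setIntegral_union (Ioc_disjoint_Ioi le_rfl) measurableSet_Ioi
        int_exp.integrableOn int_exp.integrableOn]
    ring

lemma erfc_cont : Continuous erfc := by
  have : Continuous fun z : ℝ => ∫ r in (0:ℝ)..z, Real.exp (-r^2) :=
    intervalIntegral.continuous_primitive (fun a b => int_exp.intervalIntegrable) 0
  simp only [funext erfc_eq]
  fun_prop

lemma erfc_zero : erfc 0 = 1 := by
  have h := integral_gaussian_Ioi 1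
  unfold erfc
  rw [show (fun r : ℝ => Real.exp (-r^2)) = fun r : ℝ => Real.exp (-1*r^2) by ext r; ring_nf]
  rw [h]
  have : Real.sqrt π ≠ 0 := by positivity
  field_simp

lemma g_cont (p : ℝ) : Continuous fun y => g p y := by
  have : Continuous (Function.uncurry fun (y r : ℝ) => Real.exp (-r^2 + p*r*y)) := by
    fun_prop
  exact intervalIntegral.continuous_parametric_intervalIntegral_of_continuous this continuous_id

lemma g_nonneg (p y : ℝ) (hy : 0 ≤ y) : 0 ≤ g p y :=
  intervalIntegral.integral_nonneg hy (fun _ _ => (Real.exp_pos _).le)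


/-- If `M > 0`, `N > 0` and `δ₁/K₀ > δ₂`, then the transcendental equation
`G(M,p,y) = y + N·y³` has at least one solution `ξ` with `0 < ξ < √(B/(A·M))`. -/
theorem stmt0 (A B δ₁ δ₂ K₀ γ₀ M N p : ℝ)
    (hA : 0 < A) (hB : 0 < B) (hδ₁ : 0 < δ₁) (hδ₂ : 0 < δ₂)
    (hK₀ : 0 < K₀) (hγ₀ : 0 < γ₀) (hM : 0 < M) (hN : 0 < N)
    (h : δ₂ < δ₁ / K₀) :
    ∃ ξ : ℝ, 0 < ξ ∧ ξ < Real.sqrt (B / (A * M)) ∧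
      Gfun A B δ₁ δ₂ K₀ γ₀ M p ξ = ξ + N * ξ^3 := by
  set b := Real.sqrt (B / (A * M)) with hbdef
  have hbpos : 0 < b := Real.sqrt_pos.mpr (by positivity)
  have hb2 : b^2 = B / (A * M) := Real.sq_sqrt (by positivity)
  set F : ℝ → ℝ := fun y => Gfun A B δ₁ δ₂ K₀ γ₀ M p y - (y + N * y^3) with hF
  -- continuity
  have hcont : ContinuousOn F (Icc 0 b) := by
    have hG1 : ContinuousOn (fun y => G₁ K₀ p y) (Icc 0 b) := by
      apply ContinuousOn.div
      · fun_prop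
      · exact (continuous_const.add (g_cont p)).continuousOn
      · intro y hy
        have := g_nonneg p y hy.1
        positivity
    have hG2 : Continuous (fun y => G₂ γ₀ y) := by
      apply Continuous.div
      · fun_prop
      · exact erfc_cont.comp (continuous_const.mul continuous_id)
      · intro y; exact (erfc_pos _).ne'
    unfold F
    unfold Gfun
    apply ContinuousOn.sub
    apply ContinuousOn.sub
    · exact (continuous_const.mul (by fun_prop)).continuousOn.mul hG1
    · exact ((continuous_const.mul (by fun_prop)).mul hG2).continuousOn
    · fun_prop
  -- F 0 > 0
  have hg0 : g p 0 = 0 := intervalIntegral.integral_same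
  have hF0 : F 0 = δ₁ / K₀ - δ₂ := by
    simp [hF, Gfun, G₁, G₂, hg0, erfc_zero, div_eq_mul_inv]
  have hF0pos : 0 < F 0 := by rw [hF0]; linarith
  -- F b < 0
  have hFb : F b < 0 := by
    have h1 : 1 - A*M/B * b^2 = 0 := by
      rw [hb2]; field_simp; ring
    have hG2b : 0 ≤ G₂ γ₀ b := by
      unfold G₂
      exact div_nonneg (Real.exp_pos _).le (erfc_pos _).le
    have : Gfun A B δ₁ δ₂ K₀ γ₀ M p b = - (δ₂ * (1 + M*b^2) * G₂ γ₀ b) := by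
      unfold Gfun; rw [h1]; ring
    have hFbeq : F b = Gfun A B δ₁ δ₂ K₀ γ₀ M p b - (b + N * b^3) := rfl
    rw [hFbeq, this]
    have h2 : 0 ≤ δ₂ * (1 + M*b^2) * G₂ γ₀ b := by
      apply mul_nonneg (by positivity) hG2b
    nlinarith [pow_pos hbpos 3]
  -- IVT
  have := intermediate_value_Ioo' hbpos.le hcont (a := 0)
  have h0mem : (0:ℝ) ∈ Ioo (F b) (F 0) := ⟨hFb, hF0pos⟩
  obtain ⟨ξ, hξmem, hξ⟩ := this h0mem
  refine ⟨ξ, hξmem.1, hξmem.2, ?_⟩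
  have : Gfun A B δ₁ δ₂ K₀ γ₀ M p ξ - (ξ + N * ξ^3) = 0 := hξ
  linarith
end

section
/- Suppose M > 0, N > 0, p ≤ 1 and that the transcendental equation G(M,p,y) = y + N·y³ has a solution ξ with 0 < ξ < √(B/(A·M)). Then necessarily δ₁/K₀ > δ₂. -/
open Real MeasureTheory Filter Set

lemma integrableOn_exp_neg_sq (z : ℝ) :
    IntegrableOn (fun r : ℝ => Real.exp (-r^2)) (Set.Ioi z) := by
  have : Integrable (fun r : ℝ => Real.exp (-1 * r^2)) := integrable_exp_neg_mul_sq one_pos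
  simpa using this.integrableOn

lemma erfc_le (z : ℝ) (hz : 0 ≤ z) : erfc z ≤ Real.exp (-z^2) := by
  have key : (∫ r in Set.Ioi z, Real.exp (-r^2))
      ≤ Real.exp (-z^2) * (Real.sqrt π / 2) := by
    have hle : (∫ r in Set.Ioi z, Real.exp (-r^2))
        ≤ ∫ r in Set.Ioi z, Real.exp (-z^2) * Real.exp (-(r - z)^2) := by
      apply setIntegral_mono_on (integrableOn_exp_neg_sq z)
      · have : Integrable (fun r : ℝ => Real.exp (-z^2) * Real.exp (-1 * (r - z)^2)) := by
          have := (integrable_exp_neg_mul_sq (b := 1) one_pos).comp_sub_right z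
          exact this.const_mul _
        simpa using this.integrableOn
      · exact measurableSet_Ioi
      · intro r hr
        rw [← Real.exp_add]
        apply Real.exp_le_exp.mpr
        nlinarith [Set.mem_Ioi.mp hr]
    have heq : (∫ r in Set.Ioi z, Real.exp (-(r - z)^2))
        = ∫ s in Set.Ioi (0:ℝ), Real.exp (-s^2) := by
      have := (measurePreserving_add_right (volume : Measure ℝ) z).setIntegral_preimage_emb
        (measurableEmbedding_addRight z) (fun r => Real.exp (-(r - z)^2)) (Set.Ioi z)
      have hpre : (fun x : ℝ => x + z) ⁻¹' Set.Ioi z = Set.Ioi 0 := by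
        ext x; simp
      rw [hpre] at this
      rw [← this]
      congr 1
      ext x
      simp
    have hval : (∫ s in Set.Ioi (0:ℝ), Real.exp (-s^2)) = Real.sqrt π / 2 := by
      have := integral_gaussian_Ioi 1
      simpa using this
    calc (∫ r in Set.Ioi z, Real.exp (-r^2))
        ≤ ∫ r in Set.Ioi z, Real.exp (-z^2) * Real.exp (-(r - z)^2) := hle
      _ = Real.exp (-z^2) * ∫ r in Set.Ioi z, Real.exp (-(r - z)^2) := by
          rw [integral_const_mul]
      _ = Real.exp (-z^2) * (Real.sqrt π / 2) := by rw [heq, hval]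
  unfold erfc
  have hπ : 0 < Real.sqrt π := Real.sqrt_pos.mpr Real.pi_pos
  calc (2 / Real.sqrt π) * ∫ r in Set.Ioi z, Real.exp (-r^2)
      ≤ (2 / Real.sqrt π) * (Real.exp (-z^2) * (Real.sqrt π / 2)) := by
        apply mul_le_mul_of_nonneg_left key (by positivity)
    _ = Real.exp (-z^2) := by field_simp

/-- If `M > 0`, `N > 0`, `p ≤ 1` and the transcendental equation
`G(M,p,y) = y + N·y³` has a solution `ξ` with `0 < ξ < √(B/(A·M))`, then `δ₁/K₀ > δ₂`. -/
theorem stmt2 (A B δ₁ δ₂ K₀ γ₀ M N p ξ : ℝ)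
    (hA : 0 < A) (hB : 0 < B) (hδ₁ : 0 < δ₁) (hδ₂ : 0 < δ₂)
    (hK₀ : 0 < K₀) (hγ₀ : 0 < γ₀) (hM : 0 < M) (hN : 0 < N) (hp : p ≤ 1)
    (hξpos : 0 < ξ) (hξlt : ξ < Real.sqrt (B / (A * M)))
    (hξeq : Gfun A B δ₁ δ₂ K₀ γ₀ M p ξ = ξ + N * ξ^3) :
    δ₂ < δ₁ / K₀ := by
  -- g p ξ ≥ 0
  have hg : 0 ≤ g p ξ := by
    apply intervalIntegral.integral_nonneg hξpos.le
    intro x _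
    exact (Real.exp_pos _).le
  -- G₁ bounds
  have hG₁pos : 0 < G₁ K₀ p ξ := by
    unfold G₁
    positivity
  have hG₁le : G₁ K₀ p ξ ≤ 1 / K₀ := by
    unfold G₁
    apply div_le_div₀ (by positivity)
    · exact Real.exp_le_one_iff.mpr (by nlinarith [sq_nonneg ξ])
    · exact hK₀
    · linarith
  -- G₂ ≥ 1
  have hγξ : (0:ℝ) ≤ γ₀ * ξ := by positivity
  have herfc_pos := erfc_pos (γ₀ * ξ)
  have hG₂ge : 1 ≤ G₂ γ₀ ξ := by
    unfold G₂
    rw [le_div_iff₀ herfc_pos, one_mul]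
    have := erfc_le (γ₀ * ξ) hγξ
    calc erfc (γ₀ * ξ) ≤ Real.exp (-(γ₀ * ξ)^2) := this
      _ = Real.exp (-(γ₀^2 * ξ^2)) := by ring_nf
  -- the factor 1 - AM/B ξ² ∈ (0,1]
  have hξsq : ξ^2 < B / (A * M) := by
    have h := Real.sq_sqrt (le_of_lt (by positivity : (0:ℝ) < B / (A * M)))
    nlinarith [Real.sqrt_nonneg (B / (A * M)), hξlt]
  have hfac : A * M / B * ξ^2 < 1 := by
    rw [div_mul_eq_mul_div, div_lt_one hB]
    have hAM : 0 < A * M := by positivity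
    calc A * M * ξ^2 < A * M * (B / (A * M)) := by
          apply mul_lt_mul_of_pos_left hξsq hAM
      _ = B := by field_simp
  -- RHS positive
  have hRHS : 0 < ξ + N * ξ^3 := by positivity
  have hkey : δ₂ * (1 + M * ξ^2) * G₂ γ₀ ξ < δ₁ * (1 - A*M/B * ξ^2) * G₁ K₀ p ξ := by
    have : Gfun A B δ₁ δ₂ K₀ γ₀ M p ξ > 0 := hξeq ▸ hRHS
    unfold Gfun at this
    linarith
  have h1 : δ₂ < δ₂ * (1 + M * ξ^2) * G₂ γ₀ ξ := by
    have h2 : δ₂ < δ₂ * (1 + M * ξ^2) := by nlinarith [mul_pos hδ₂ (mul_pos hM (pow_pos hξpos 2))]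
    calc δ₂ < δ₂ * (1 + M * ξ^2) := h2
      _ = δ₂ * (1 + M * ξ^2) * 1 := by ring
      _ ≤ δ₂ * (1 + M * ξ^2) * G₂ γ₀ ξ := by
          apply mul_le_mul_of_nonneg_left hG₂ge (by nlinarith)
  have h3 : δ₁ * (1 - A*M/B * ξ^2) * G₁ K₀ p ξ ≤ δ₁ / K₀ := by
    have hfac' : 0 < 1 - A*M/B * ξ^2 := by linarith
    calc δ₁ * (1 - A*M/B * ξ^2) * G₁ K₀ p ξ
        ≤ δ₁ * 1 * G₁ K₀ p ξ := by
          apply mul_le_mul_of_nonneg_right _ hG₁pos.le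
          have hx : 0 ≤ A*M/B*ξ^2 := by positivity
          nlinarith [mul_nonneg hδ₁.le hx]
      _ = δ₁ * G₁ K₀ p ξ := by ring
      _ ≤ δ₁ * (1 / K₀) := mul_le_mul_of_nonneg_left hG₁le hδ₁.le
      _ = δ₁ / K₀ := by ring
  linarith
end

section
/- Suppose M > 0, N > 0, p ≤ 1, and let 0 < K₀' < K₀ be two constants with δ₁/K₀ > δ₂ (hence also δ₁/K₀' > δ₂). Let ξ and ξ' denote the unique solutions in (0, √(B/(A·M))) of the transcendental equation G(M,p,y) = y + N·y³ corresponding to the constants K₀ and K₀' respectively. Then ξ < ξ'. (In the Stefan-problem application K₀ = k_U/(2α_U h₀), so the coefficient ξ characterizing the free boundary is a strictly increasing function of the heat-transfer coefficient h₀.) -/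
open Real MeasureTheory Filter Set

/-! ### Auxiliary lemmas -/

/-- The auxiliary integral obtained from `g` by the substitution `r ↦ y − u`. -/
noncomputable def hh (p y : ℝ) : ℝ := ∫ u in (0:ℝ)..y, Real.exp (-u^2 + (2-p)*u*y)

lemma g_eq (p y : ℝ) : g p y = Real.exp ((p-1)*y^2) * hh p y := by
  have h1 := intervalIntegral.integral_comp_sub_left
    (a := 0) (b := y) (fun r => Real.exp (-r^2 + p*r*y)) y
  simp only [sub_self, sub_zero] at h1
  rw [g, ← h1]
  rw [show (fun x => Real.exp (-(y-x)^2 + p*(y-x)*y))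
      = fun x => Real.exp ((p-1)*y^2) * Real.exp (-x^2 + (2-p)*x*y) from ?_]
  · exact intervalIntegral.integral_const_mul _ _
  · funext x
    rw [← Real.exp_add]
    ring_nf

lemma hh_cont (p y : ℝ) : Continuous fun u => Real.exp (-u^2 + (2-p)*u*y) := by
  fun_prop

lemma hh_pos {p y : ℝ} (hy : 0 < y) : 0 < hh p y :=
  intervalIntegral.intervalIntegral_pos_of_pos_on
    ((hh_cont p y).intervalIntegrable 0 y) (fun x _ => Real.exp_pos _) hy

lemma hh_mono {p y₁ y₂ : ℝ} (hp : p ≤ 1) (h0 : 0 ≤ y₁) (h12 : y₁ ≤ y₂) :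
    hh p y₁ ≤ hh p y₂ := by
  have step1 : hh p y₁ ≤ ∫ u in (0:ℝ)..y₁, Real.exp (-u^2 + (2-p)*u*y₂) := by
    apply intervalIntegral.integral_mono_on h0
      ((hh_cont p y₁).intervalIntegrable 0 y₁) ((hh_cont p y₂).intervalIntegrable 0 y₁)
    intro x hx
    have hx0 : 0 ≤ x := hx.1
    have : (2-p)*x*y₁ ≤ (2-p)*x*y₂ := by
      nlinarith [mul_nonneg (show (0:ℝ) ≤ 2-p by linarith) hx0]
    exact Real.exp_le_exp.mpr (by linarith)
  have step2 : (∫ u in (0:ℝ)..y₁, Real.exp (-u^2 + (2-p)*u*y₂)) ≤ hh p y₂ := by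
    rw [hh, ← intervalIntegral.integral_add_adjacent_intervals
      ((hh_cont p y₂).intervalIntegrable 0 y₁) ((hh_cont p y₂).intervalIntegrable y₁ y₂)]
    have : 0 ≤ ∫ u in y₁..y₂, Real.exp (-u^2 + (2-p)*u*y₂) :=
      intervalIntegral.integral_nonneg h12 (fun x _ => (Real.exp_pos _).le)
    linarith
  exact step1.trans step2

lemma G1_eq (K p y : ℝ) : G₁ K p y = 1 / (K * Real.exp ((1-p)*y^2) + hh p y) := by
  have hexp : Real.exp ((p-1)*y^2) * Real.exp ((1-p)*y^2) = 1 := by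
    rw [← Real.exp_add, show (p-1)*y^2 + (1-p)*y^2 = 0 by ring, Real.exp_zero]
  have hden : K + Real.exp ((p-1)*y^2) * hh p y
      = Real.exp ((p-1)*y^2) * (K * Real.exp ((1-p)*y^2) + hh p y) := by
    rw [mul_add]
    rw [show Real.exp ((p-1)*y^2) * (K * Real.exp ((1-p)*y^2))
        = K * (Real.exp ((p-1)*y^2) * Real.exp ((1-p)*y^2)) by ring, hexp]
    ring
  rw [G₁, g_eq, hden]
  simpa using mul_div_mul_left (1:ℝ) (K * Real.exp ((1-p)*y^2) + hh p y)
    (Real.exp_ne_zero ((p-1)*y^2))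

lemma G1_pos {K p y : ℝ} (hK : 0 < K) (hy : 0 < y) : 0 < G₁ K p y := by
  rw [G1_eq]
  have := hh_pos (p := p) hy
  positivity

lemma G1_anti {K p y₁ y₂ : ℝ} (hK : 0 < K) (hp : p ≤ 1) (h1 : 0 < y₁) (h12 : y₁ ≤ y₂) :
    G₁ K p y₂ ≤ G₁ K p y₁ := by
  rw [G1_eq, G1_eq]
  have hd1 : 0 < K * Real.exp ((1-p)*y₁^2) + hh p y₁ := by
    have := hh_pos (p := p) h1; positivity
  apply one_div_le_one_div_of_le hd1
  have h2 : Real.exp ((1-p)*y₁^2) ≤ Real.exp ((1-p)*y₂^2) := by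
    apply Real.exp_le_exp.mpr
    have : y₁^2 ≤ y₂^2 := pow_le_pow_left₀ h1.le h12 2
    nlinarith
  have h3 := hh_mono (p := p) hp h1.le h12
  nlinarith

lemma G1_lt {K K' p y : ℝ} (hK' : 0 < K') (hKK : K' < K) (hy : 0 < y) :
    G₁ K p y < G₁ K' p y := by
  rw [G1_eq, G1_eq]
  have hhp := hh_pos (p := p) hy
  have hd1 : 0 < K' * Real.exp ((1-p)*y^2) + hh p y := by positivity
  apply one_div_lt_one_div_of_lt hd1
  have := Real.exp_pos ((1-p)*y^2)
  nlinarith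

lemma intE (x : ℝ) : IntegrableOn (fun r : ℝ => Real.exp (-r^2)) (Ioi x) := by
  have := integrable_exp_neg_mul_sq (b := 1) one_pos
  simpa using this.integrableOn

lemma E_pos (x : ℝ) : 0 < ∫ r in Ioi x, Real.exp (-r^2) := by
  refine (setIntegral_pos_iff_support_of_nonneg_ae ?_ (intE x)).mpr ?_
  · filter_upwards with r using (Real.exp_pos _).le
  · have hsupp : (Function.support fun r : ℝ => Real.exp (-r^2)) = univ := by
      ext r; simp [Real.exp_ne_zero]
    rw [hsupp, univ_inter, Real.volume_Ioi]
    simp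

set_option maxHeartbeats 1000000 in
lemma E_key {x₁ x₂ : ℝ} (h : x₁ ≤ x₂) :
    Real.exp (x₂^2) * ∫ r in Ioi x₂, Real.exp (-r^2)
      ≤ Real.exp (x₁^2) * ∫ r in Ioi x₁, Real.exp (-r^2) := by
  have hemb : MeasurableEmbedding (fun r : ℝ => r + (x₂ - x₁)) :=
    (MeasurableEquiv.addRight (x₂ - x₁)).measurableEmbedding
  have hmp : MeasurePreserving (fun r : ℝ => r + (x₂ - x₁))
      (volume.restrict (Ioi x₁)) (volume.restrict (Ioi x₂)) := by
    have := (measurePreserving_add_right volume (x₂ - x₁)).restrict_preimage_emb hemb (Ioi x₂)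
    rwa [preimage_add_const_Ioi, show x₂ - (x₂ - x₁) = x₁ by ring] at this
  have trans : (∫ r in Ioi x₂, Real.exp (x₂^2) * Real.exp (-r^2))
      = ∫ r in Ioi x₁, Real.exp (x₂^2) * Real.exp (-(r + (x₂ - x₁))^2) :=
    (hmp.integral_comp hemb (fun r => Real.exp (x₂^2) * Real.exp (-r^2))).symm
  have hint2 : IntegrableOn
      (fun r : ℝ => Real.exp (x₂^2) * Real.exp (-(r + (x₂ - x₁))^2)) (Ioi x₁) := by
    have : Integrable (fun r => Real.exp (x₂^2) * Real.exp (-r^2)) (volume.restrict (Ioi x₂)) :=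
      (intE x₂).const_mul _
    have h2 := (hmp.integrable_comp_emb hemb
      (g := fun r => Real.exp (x₂^2) * Real.exp (-r^2))).mpr this
    exact h2
  calc Real.exp (x₂^2) * ∫ r in Ioi x₂, Real.exp (-r^2)
      = ∫ r in Ioi x₂, Real.exp (x₂^2) * Real.exp (-r^2) := (integral_const_mul _ _).symm
    _ = ∫ r in Ioi x₁, Real.exp (x₂^2) * Real.exp (-(r + (x₂ - x₁))^2) := trans
    _ ≤ ∫ r in Ioi x₁, Real.exp (x₁^2) * Real.exp (-r^2) := by
        apply setIntegral_mono_on hint2 ((intE x₁).const_mul _) measurableSet_Ioi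
        intro r hr
        rw [← Real.exp_add, ← Real.exp_add]
        apply Real.exp_le_exp.mpr
        have hr' : x₁ < r := hr
        nlinarith [mul_nonneg (sub_nonneg.2 h) (sub_nonneg.2 hr'.le)]
    _ = Real.exp (x₁^2) * ∫ r in Ioi x₁, Real.exp (-r^2) := integral_const_mul _ _

lemma G2_pos (γ₀ y : ℝ) : 0 < G₂ γ₀ y :=
  div_pos (Real.exp_pos _) (erfc_pos _)

lemma G2_mono {γ₀ y₁ y₂ : ℝ} (hγ : 0 ≤ γ₀) (h12 : y₁ ≤ y₂) :
    G₂ γ₀ y₁ ≤ G₂ γ₀ y₂ := by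
  have hx : γ₀ * y₁ ≤ γ₀ * y₂ := mul_le_mul_of_nonneg_left h12 hγ
  have key := E_key hx
  rw [G₂, G₂, div_le_div_iff₀ (erfc_pos _) (erfc_pos _), erfc, erfc]
  rw [show γ₀^2*y₁^2 = (γ₀*y₁)^2 by ring, show γ₀^2*y₂^2 = (γ₀*y₂)^2 by ring]
  set x₁ := γ₀ * y₁
  set x₂ := γ₀ * y₂
  set E₁ := ∫ r in Ioi x₁, Real.exp (-r^2)
  set E₂ := ∫ r in Ioi x₂, Real.exp (-r^2)
  have hc : (0:ℝ) < 2 / Real.sqrt π := by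
    have : 0 < Real.sqrt π := Real.sqrt_pos.mpr Real.pi_pos
    positivity
  have main : Real.exp (-x₁^2) * E₂ ≤ Real.exp (-x₂^2) * E₁ := by
    have h2 := mul_le_mul_of_nonneg_left key (Real.exp_pos (-x₁^2 - x₂^2)).le
    calc Real.exp (-x₁^2) * E₂
        = Real.exp (-x₁^2 - x₂^2) * (Real.exp (x₂^2) * E₂) := by
          rw [← mul_assoc, ← Real.exp_add]; ring_nf
      _ ≤ Real.exp (-x₁^2 - x₂^2) * (Real.exp (x₁^2) * E₁) := h2
      _ = Real.exp (-x₂^2) * E₁ := by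
          rw [← mul_assoc, ← Real.exp_add]; ring_nf
  nlinarith [E_pos x₁, E_pos x₂, Real.exp_pos (-x₁^2), Real.exp_pos (-x₂^2)]

set_option maxHeartbeats 1000000 in
/-- For `M > 0`, `N > 0`, `p ≤ 1`, `0 < K₀' < K₀` and `δ₁/K₀ > δ₂`, if `ξ` and
`ξ'` are the (unique) solutions in `(0, √(B/(A·M)))` of the transcendental equation with
constants `K₀` and `K₀'` respectively, then `ξ < ξ'`. -/
theorem stmt3 (A B δ₁ δ₂ K₀ K₀' γ₀ M N p ξ ξ' : ℝ)
    (hA : 0 < A) (hB : 0 < B) (hδ₁ : 0 < δ₁) (hδ₂ : 0 < δ₂)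
    (hK₀' : 0 < K₀') (hlt : K₀' < K₀) (hγ₀ : 0 < γ₀)
    (hM : 0 < M) (hN : 0 < N) (hp : p ≤ 1)
    (h : δ₂ < δ₁ / K₀)
    (hξpos : 0 < ξ) (hξlt : ξ < Real.sqrt (B / (A * M)))
    (hξeq : Gfun A B δ₁ δ₂ K₀ γ₀ M p ξ = ξ + N * ξ^3)
    (hξ'pos : 0 < ξ') (hξ'lt : ξ' < Real.sqrt (B / (A * M)))
    (hξ'eq : Gfun A B δ₁ δ₂ K₀' γ₀ M p ξ' = ξ' + N * ξ'^3) :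
    ξ < ξ' := by
  by_contra hcon
  push_neg at hcon
  -- `hcon : ξ' ≤ ξ`
  have hsq : ξ^2 < B / (A * M) := by
    have := (Real.lt_sqrt hξpos.le).mp hξlt
    linarith
  have hfac : 0 < 1 - A*M/B * ξ^2 := by
    have h1 : A*M/B * ξ^2 < A*M/B * (B/(A*M)) :=
      mul_lt_mul_of_pos_left hsq (by positivity)
    have h2 : A*M/B * (B/(A*M)) = 1 := by field_simp
    linarith
  have hsq' : ξ'^2 ≤ ξ^2 := pow_le_pow_left₀ hξ'pos.le hcon 2
  have hfac' : 1 - A*M/B * ξ^2 ≤ 1 - A*M/B * ξ'^2 := by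
    have : A*M/B * ξ'^2 ≤ A*M/B * ξ^2 :=
      mul_le_mul_of_nonneg_left hsq' (by positivity)
    linarith
  -- `G₁` facts
  have hG1anti : G₁ K₀' p ξ ≤ G₁ K₀' p ξ' := G1_anti hK₀' hp hξ'pos hcon
  have hG1lt : G₁ K₀ p ξ < G₁ K₀' p ξ := G1_lt hK₀' hlt hξpos
  have hG1posK : 0 < G₁ K₀ p ξ := G1_pos (hK₀'.trans hlt) hξpos
  have hG1posK' : 0 < G₁ K₀' p ξ := G1_pos hK₀' hξpos
  -- `G₂` facts
  have hG2mono : G₂ γ₀ ξ' ≤ G₂ γ₀ ξ := G2_mono hγ₀.le hcon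
  have hG2pos : 0 < G₂ γ₀ ξ' := G2_pos _ _
  -- term-by-term comparisons
  have hT1 : δ₁ * (1 - A*M/B * ξ^2) * G₁ K₀' p ξ ≤ δ₁ * (1 - A*M/B * ξ'^2) * G₁ K₀' p ξ' := by
    apply mul_le_mul ?_ hG1anti hG1posK'.le ?_
    · nlinarith
    · nlinarith
  have hT2 : δ₂ * (1 + M*ξ'^2) * G₂ γ₀ ξ' ≤ δ₂ * (1 + M*ξ^2) * G₂ γ₀ ξ := by
    apply mul_le_mul ?_ hG2mono hG2pos.le ?_
    · nlinarith [mul_nonneg hδ₂.le (mul_nonneg hM.le (sub_nonneg.2 hsq'))]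
    · nlinarith [mul_nonneg hM.le (sq_nonneg ξ)]
  have hstep1 : Gfun A B δ₁ δ₂ K₀' γ₀ M p ξ ≤ Gfun A B δ₁ δ₂ K₀' γ₀ M p ξ' := by
    rw [Gfun, Gfun]; linarith
  have hstep2 : Gfun A B δ₁ δ₂ K₀ γ₀ M p ξ < Gfun A B δ₁ δ₂ K₀' γ₀ M p ξ := by
    rw [Gfun, Gfun]
    have : δ₁ * (1 - A*M/B * ξ^2) * G₁ K₀ p ξ < δ₁ * (1 - A*M/B * ξ^2) * G₁ K₀' p ξ :=
      mul_lt_mul_of_pos_left hG1lt (by positivity)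
    linarith
  have hcube : ξ'^3 ≤ ξ^3 := pow_le_pow_left₀ hξ'pos.le hcon 3
  have : ξ + N * ξ^3 < ξ' + N * ξ'^3 := by
    calc ξ + N * ξ^3 = Gfun A B δ₁ δ₂ K₀ γ₀ M p ξ := hξeq.symm
      _ < Gfun A B δ₁ δ₂ K₀' γ₀ M p ξ := hstep2
      _ ≤ Gfun A B δ₁ δ₂ K₀' γ₀ M p ξ' := hstep1
      _ = ξ' + N * ξ'^3 := hξ'eq
  nlinarith
end

section
/- Suppose M > 0, N > 0, p ≤ 1 and δ₁/K₀ > δ₂, and let ξ ∈ (0, √(B/(A·M))) be the unique solution of the convective transcendental equation G(M,p,y) = y + N·y³. Define B₀ = (B·g(p,ξ) + A·M·K₀·ξ²)/(g(p,ξ) + K₀) and δ̃₁ = δ₁·B₀/B. Then B₀ > 0 and ξ satisfies the temperature-condition equation δ̃₁(1 − (A·M/B₀)ξ²)·exp((p−1)ξ²)/g(p,ξ) − δ₂(1 + M·ξ²)G₂(ξ) = ξ + N·ξ³. (Thus the convective-condition Stefan problem coincides with the temperature-condition problem with boundary temperature B₀, and the two free-boundary coefficients are equal.) -/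
open Real MeasureTheory Filter Set

lemma g_pos (p : ℝ) {ξ : ℝ} (hξ : 0 < ξ) : 0 < g p ξ := by
  have hc : Continuous fun r : ℝ => Real.exp (-r^2 + p*r*ξ) := by continuity
  exact intervalIntegral.intervalIntegral_pos_of_pos_on
    (hc.intervalIntegrable 0 ξ)
    (fun x _ => Real.exp_pos _) hξ

/-- For `M > 0`, `N > 0`, `p ≤ 1` and `δ₁/K₀ > δ₂`, if `ξ ∈ (0, √(B/(A·M)))`
solves the convective equation, and `B₀ = (B·g(p,ξ) + A·M·K₀·ξ²)/(g(p,ξ) + K₀)` and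
`δ̃₁ = δ₁·B₀/B`, then `B₀ > 0` and `ξ` satisfies the temperature-condition equation with
constants `δ̃₁`, `B₀`. -/
theorem stmt10 (A B B₀ δ₁ δt δ₂ K₀ γ₀ M N p ξ : ℝ)
    (hA : 0 < A) (hB : 0 < B) (hδ₁ : 0 < δ₁) (hδ₂ : 0 < δ₂)
    (hK₀ : 0 < K₀) (hγ₀ : 0 < γ₀) (hM : 0 < M) (hN : 0 < N) (hp : p ≤ 1)
    (h : δ₂ < δ₁ / K₀)
    (hξpos : 0 < ξ) (hξlt : ξ < Real.sqrt (B / (A * M)))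
    (hξeq : Gfun A B δ₁ δ₂ K₀ γ₀ M p ξ = ξ + N * ξ^3)
    (hB₀ : B₀ = (B * g p ξ + A * M * K₀ * ξ^2) / (g p ξ + K₀))
    (hδt : δt = δ₁ * B₀ / B) :
    0 < B₀ ∧
    δt * (1 - A*M/B₀ * ξ^2) * (Real.exp ((p-1)*ξ^2) / g p ξ)
      - δ₂ * (1 + M*ξ^2) * G₂ γ₀ ξ = ξ + N * ξ^3 := by
  have hg : 0 < g p ξ := g_pos p hξpos
  have hgK : 0 < g p ξ + K₀ := by linarith
  have hB₀pos : 0 < B₀ := by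
    rw [hB₀]
    positivity
  refine ⟨hB₀pos, ?_⟩
  have key : δt * (1 - A*M/B₀ * ξ^2) * (Real.exp ((p-1)*ξ^2) / g p ξ)
      = δ₁ * (1 - A*M/B * ξ^2) * G₁ K₀ p ξ := by
    rw [hδt, hB₀, G₁]
    field_simp
    ring
  rw [key]
  rw [Gfun] at hξeq
  exact hξeq
end

section
/- Suppose M > 0, N > 0 and p ≤ 1. Let ω ∈ (0, √(B₀/(A·M))) satisfy the temperature-condition equation δ̃₁(1 − (A·M/B₀)y²)·exp((p−1)y²)/g(p,y) − δ₂(1 + M·y²)G₂(y) = y + N·y³. Let B > B₀ and define K₀ = (B − B₀)·g(p,ω)/(B₀ − A·M·ω²) and δ₁ = δ̃₁·B/B₀. Then K₀ > 0 and ω satisfies the convective transcendental equation δ₁(1 − (A·M/B)ω²)·exp((p−1)ω²)/(K₀ + g(p,ω)) − δ₂(1 + M·ω²)G₂(ω) = ω + N·ω³ with these constants. -/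
open Real MeasureTheory Filter Set

/-- For `M > 0`, `N > 0`, `p ≤ 1`, if `ω ∈ (0, √(B₀/(A·M)))` solves the
temperature-condition equation with constants `δ̃₁`, `B₀`, and `B > B₀`, and we define
`K₀ = (B − B₀)·g(p,ω)/(B₀ − A·M·ω²)` and `δ₁ = δ̃₁·B/B₀`, then `K₀ > 0` and `ω` solves the
convective transcendental equation with these constants. -/
theorem stmt11 (A B B₀ δ₁ δt δ₂ K₀ γ₀ M N p ω : ℝ)
    (hA : 0 < A) (hB₀ : 0 < B₀) (hδt : 0 < δt) (hδ₂ : 0 < δ₂)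
    (hγ₀ : 0 < γ₀) (hM : 0 < M) (hN : 0 < N) (hp : p ≤ 1)
    (hωpos : 0 < ω) (hωlt : ω < Real.sqrt (B₀ / (A * M)))
    (hωeq : δt * (1 - A*M/B₀ * ω^2) * (Real.exp ((p-1)*ω^2) / g p ω)
        - δ₂ * (1 + M*ω^2) * G₂ γ₀ ω = ω + N * ω^3)
    (hBB₀ : B₀ < B)
    (hK₀ : K₀ = (B - B₀) * g p ω / (B₀ - A * M * ω^2))
    (hδ₁ : δ₁ = δt * B / B₀) :
    0 < K₀ ∧ Gfun A B δ₁ δ₂ K₀ γ₀ M p ω = ω + N * ω^3 := by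
  have hg : 0 < g p ω := by
    rw [g]
    apply intervalIntegral.intervalIntegral_pos_of_pos_on
    · exact (Continuous.rexp (by continuity)).intervalIntegrable 0 ω
    · intro x hx; positivity
    · exact hωpos
  have hω2 : ω ^ 2 < B₀ / (A * M) := (Real.lt_sqrt hωpos.le).mp hωlt
  have hden : 0 < B₀ - A * M * ω ^ 2 := by
    have h := (lt_div_iff₀ (by positivity)).mp hω2
    nlinarith
  have hBpos : (0:ℝ) < B := lt_trans hB₀ hBB₀
  have hBm : 0 < B - A * M * ω ^ 2 := by linarith
  have hK₀pos : 0 < K₀ := by rw [hK₀]; exact div_pos (mul_pos (sub_pos.mpr hBB₀) hg) hden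
  refine ⟨hK₀pos, ?_⟩
  have hKg : K₀ + g p ω = g p ω * (B - A * M * ω ^ 2) / (B₀ - A * M * ω ^ 2) := by
    rw [hK₀]; field_simp; ring
  have h1 : δ₁ * (1 - A*M/B * ω^2) * G₁ K₀ p ω
      = δt * (1 - A*M/B₀ * ω^2) * (Real.exp ((p-1)*ω^2) / g p ω) := by
    rw [G₁, hKg, hδ₁]
    field_simp
  rw [Gfun, h1, hωeq]
end

section
/- Suppose M > 0, N > 0 and p ≤ 1, and let ω ∈ (0, √(B₀/(A·M))) satisfy the temperature-condition equation δ̃₁(1 − (A·M/B₀)y²)·exp((p−1)y²)/g(p,y) − δ₂(1 + M·y²)G₂(y) = y + N·y³. Then for every B > B₀ the strict inequality δ̃₁(1 − (A·M/B₀)ω²)/g(p,ω) > δ₂·(B − B₀)/B holds. (In physical variables this reads (B₀ − A·M·ω²)/g(p,ω) > 2α_U·k_F·A·(B − B₀)/(α_F·k_U·B·√π).) -/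
open Real MeasureTheory Filter Set

lemma one_le_G₂ (γ₀ y : ℝ) (h : 0 ≤ γ₀ * y) : 1 ≤ G₂ γ₀ y := by
  have h1 : erfc (γ₀*y) ≤ Real.exp (-(γ₀^2*y^2)) := by
    have := erfc_le (γ₀*y) h
    convert this using 2
    ring
  rw [G₂, le_div_iff₀ (erfc_pos _), one_mul]
  exact h1

/-- For `M > 0`, `N > 0`, `p ≤ 1`, if `ω ∈ (0, √(B₀/(A·M)))` solves the
temperature-condition equation, then for every `B > B₀`:
`δ̃₁(1 − (A·M/B₀)ω²)/g(p,ω) > δ₂·(B − B₀)/B`. -/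
theorem stmt12 (A B₀ δt δ₂ γ₀ M N p ω : ℝ)
    (hA : 0 < A) (hB₀ : 0 < B₀) (hδt : 0 < δt) (hδ₂ : 0 < δ₂)
    (hγ₀ : 0 < γ₀) (hM : 0 < M) (hN : 0 < N) (hp : p ≤ 1)
    (hωpos : 0 < ω) (hωlt : ω < Real.sqrt (B₀ / (A * M)))
    (hωeq : δt * (1 - A*M/B₀ * ω^2) * (Real.exp ((p-1)*ω^2) / g p ω)
        - δ₂ * (1 + M*ω^2) * G₂ γ₀ ω = ω + N * ω^3) :
    ∀ B : ℝ, B₀ < B →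
      δt * (1 - A*M/B₀ * ω^2) / g p ω > δ₂ * (B - B₀) / B := by
  intro B hB
  have hBpos : 0 < B := hB₀.trans hB
  -- g > 0
  have hg : 0 < g p ω := by
    apply intervalIntegral.intervalIntegral_pos_of_pos
    · exact (Continuous.intervalIntegrable (by continuity) 0 ω)
    · intro x; exact Real.exp_pos _
    · exact hωpos
  -- 1 - c ω² > 0
  have hω2 : ω^2 < B₀ / (A*M) := by
    have := (Real.lt_sqrt hωpos.le).1 hωlt
    exact this
  have hAM : 0 < A*M := mul_pos hA hM
  have hc : 0 < 1 - A*M/B₀ * ω^2 := by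
    have h1 : A*M*ω^2 < B₀ := by
      rw [lt_div_iff₀ hAM] at hω2; linarith [hω2]
    have : A*M/B₀ * ω^2 < 1 := by
      rw [div_mul_eq_mul_div, div_lt_one hB₀]; nlinarith
    linarith
  have hG₂ : 1 ≤ G₂ γ₀ ω := one_le_G₂ γ₀ ω (by positivity)
  -- δ₂ < LHS of equation
  have hexp : Real.exp ((p-1)*ω^2) ≤ 1 := by
    apply Real.exp_le_one_iff.2
    nlinarith [sq_nonneg ω]
  have hX : δ₂ < δt * (1 - A*M/B₀ * ω^2) * (Real.exp ((p-1)*ω^2) / g p ω) := by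
    have h1 : (1:ℝ) ≤ 1 + M*ω^2 := by nlinarith [sq_nonneg ω]
    have h2 : (1:ℝ)*1 ≤ (1 + M*ω^2) * G₂ γ₀ ω :=
      mul_le_mul h1 hG₂ one_pos.le (by linarith)
    have hY : δ₂ ≤ δ₂ * (1 + M*ω^2) * G₂ γ₀ ω := by nlinarith
    have h3 : 0 < ω + N * ω^3 := by positivity
    linarith
  have hfinal : δt * (1 - A*M/B₀ * ω^2) * (Real.exp ((p-1)*ω^2) / g p ω)
      ≤ δt * (1 - A*M/B₀ * ω^2) / g p ω := by
    rw [div_eq_mul_one_div (δt * (1 - A*M/B₀ * ω^2)) (g p ω)]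
    exact mul_le_mul_of_nonneg_left ((div_le_div_iff_of_pos_right hg).2 hexp) (by positivity)
  have hRHS : δ₂ * (B - B₀) / B < δ₂ := by
    rw [div_lt_iff₀ hBpos]
    nlinarith
  linarith
end

section
/- For every real p < 2 and every constant K₀ > 0: lim_{y→+∞} G₁(p,y) = 0 and lim_{y→+∞} y²·G₁(p,y) = 0. Consequently, for every real constant c, lim_{y→+∞} (1 − c·y²)·G₁(p,y) = 0. -/
open Real MeasureTheory Filter Set

lemma aux_tendsto (a : ℝ) (ha : 0 < a) (n : ℕ) :
    Tendsto (fun y : ℝ => y^n * Real.exp (-(a*y^2))) atTop (nhds 0) := by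
  have h1 : Tendsto (fun y : ℝ => a * y^2) atTop atTop :=
    (tendsto_pow_atTop (two_ne_zero)).const_mul_atTop ha
  have h2 : Tendsto (fun y : ℝ => (1/a^n) * ((a*y^2)^n * Real.exp (-(a*y^2)))) atTop (nhds 0) := by
    have := ((Real.tendsto_pow_mul_exp_neg_atTop_nhds_zero n).comp h1).const_mul (1/a^n)
    simpa using this
  apply squeeze_zero' ?_ ?_ h2
  · filter_upwards [eventually_ge_atTop (0:ℝ)] with y hy
    positivity
  · filter_upwards [eventually_ge_atTop (1:ℝ)] with y hy
    have h3 : y^n ≤ (1/a^n) * (a*y^2)^n := by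
      rw [mul_pow, one_div, ← mul_assoc, inv_mul_cancel₀ (by positivity), one_mul]
      calc y^n ≤ (y^2)^n := pow_le_pow_left₀ (by linarith) (by nlinarith) n
        _ = (y^2)^n := rfl
    calc y^n * Real.exp (-(a*y^2)) ≤ (1/a^n) * (a*y^2)^n * Real.exp (-(a*y^2)) := by
          apply mul_le_mul_of_nonneg_right h3 (Real.exp_nonneg _)
      _ = 1/a^n * ((a*y^2)^n * Real.exp (-(a*y^2))) := by ring

lemma g_lb (p y : ℝ) (hp1 : 1 ≤ p) (hp2 : p < 2) (hy : 0 ≤ y) :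
    (2-p)/4 * y * Real.exp ((p*(p+2)/4 - ((p+2)/4)^2) * y^2) ≤ g p y := by
  set a := p/2*y with ha
  set b := (p+2)/4*y with hb
  set c := p*(p+2)/4 - ((p+2)/4)^2 with hc
  have hab : a ≤ b := by rw [ha, hb]; nlinarith
  have h0a : 0 ≤ a := by positivity
  have hby : b ≤ y := by rw [hb]; nlinarith
  have hcont : Continuous (fun r : ℝ => Real.exp (-r^2 + p*r*y)) := by continuity
  have hint : IntegrableOn (fun r : ℝ => Real.exp (-r^2 + p*r*y)) (Ioc 0 y) volume :=
    hcont.integrableOn_Ioc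
  have step1 : ∫ r in Ioc a b, Real.exp (-r^2 + p*r*y) ≤ g p y := by
    rw [g, intervalIntegral.integral_of_le hy]
    apply setIntegral_mono_set hint
    · filter_upwards with x; positivity
    · exact (Ioc_subset_Ioc h0a hby).eventuallyLE
  refine le_trans ?_ step1
  have hpt : ∀ x ∈ Ioc a b, Real.exp (c*y^2) ≤ Real.exp (-x^2 + p*x*y) := by
    intro x hx
    rw [Real.exp_le_exp]
    obtain ⟨hx1, hx2⟩ := hx
    rw [ha] at hx1; rw [hb] at hx2; rw [hc]
    nlinarith [mul_nonneg (by linarith : (0:ℝ) ≤ x - p/2*y) (by linarith : (0:ℝ) ≤ (p+2)/4*y - x)]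
  calc (2-p)/4 * y * Real.exp (c*y^2)
      = Real.exp (c*y^2) * (volume (Ioc a b)).toReal := by
        rw [Real.volume_Ioc, ENNReal.toReal_ofReal (by linarith)]
        rw [ha, hb]; ring
    _ ≤ _ := setIntegral_ge_of_const_le_real measurableSet_Ioc
        (measure_Ioc_lt_top.ne) hpt (hcont.integrableOn_Ioc)


/-- For `p < 2` and `K₀ > 0`: `G₁(p,y) → 0` and `y²·G₁(p,y) → 0` as
`y → +∞`; consequently `(1 − c·y²)·G₁(p,y) → 0` for every real `c`. -/
theorem stmt14 (p K₀ : ℝ) (hp : p < 2) (hK₀ : 0 < K₀) :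
    Tendsto (fun y : ℝ => G₁ K₀ p y) atTop (nhds 0) ∧
    Tendsto (fun y : ℝ => y^2 * G₁ K₀ p y) atTop (nhds 0) ∧
    ∀ c : ℝ, Tendsto (fun y : ℝ => (1 - c * y^2) * G₁ K₀ p y) atTop (nhds 0) := by
  have hnn : ∀ᶠ y : ℝ in atTop, 0 ≤ G₁ K₀ p y := by
    filter_upwards [eventually_ge_atTop (0:ℝ)] with y hy
    have hg := g_nonneg p y hy
    apply div_nonneg (Real.exp_nonneg _) (by linarith)
  have h2 : Tendsto (fun y : ℝ => y^2 * G₁ K₀ p y) atTop (nhds 0) := by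
    rcases lt_or_ge p 1 with hp1 | hp1
    · have ha : (0:ℝ) < 1 - p := by linarith
      apply squeeze_zero' ?_ ?_ (by simpa using (aux_tendsto (1-p) ha 2).const_mul (1/K₀))
      · filter_upwards [hnn, eventually_ge_atTop (0:ℝ)] with y h1 h2
        positivity
      · filter_upwards [eventually_ge_atTop (0:ℝ)] with y hy
        have hg := g_nonneg p y hy
        have hexp : Real.exp ((p-1)*y^2) = Real.exp (-((1-p)*y^2)) := by ring_nf
        rw [G₁, hexp]
        rw [div_eq_mul_inv, ← mul_assoc]
        calc y^2 * Real.exp (-((1-p)*y^2)) * (K₀ + g p y)⁻¹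
            ≤ y^2 * Real.exp (-((1-p)*y^2)) * K₀⁻¹ := by
              apply mul_le_mul_of_nonneg_left (inv_anti₀ hK₀ (by linarith)) (by positivity)
          _ = K₀⁻¹ * (y^2 * Real.exp (-((1-p)*y^2))) := by ring
    · set d : ℝ := (2-p)/4 with hd
      set c : ℝ := p*(p+2)/4 - ((p+2)/4)^2 with hc
      have hdpos : 0 < d := by rw [hd]; linarith
      set ε : ℝ := c - (p-1) with hε'
      have hε : 0 < ε := by rw [hε', hc]; nlinarith
      apply squeeze_zero' ?_ ?_ (by simpa using (aux_tendsto ε hε 1).const_mul (1/d))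
      · filter_upwards [hnn, eventually_ge_atTop (0:ℝ)] with y h1 h2
        positivity
      · filter_upwards [eventually_ge_atTop (1:ℝ)] with y hy
        have hy0 : (0:ℝ) < y := by linarith
        have hlb := g_lb p y hp1 hp hy0.le
        rw [← hc, ← hd] at hlb
        have hden : 0 < d * y * Real.exp (c*y^2) := by positivity
        have hexp : Real.exp ((p-1)*y^2) = Real.exp (c*y^2) * Real.exp (-(ε*y^2)) := by
          rw [← Real.exp_add, hε']; ring_nf
        rw [G₁]
        calc y^2 * (Real.exp ((p-1)*y^2) / (K₀ + g p y))
            ≤ y^2 * (Real.exp ((p-1)*y^2) / (d * y * Real.exp (c*y^2))) := by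
              apply mul_le_mul_of_nonneg_left ?_ (by positivity)
              apply div_le_div_of_nonneg_left (Real.exp_nonneg _) hden (by linarith)
          _ = d⁻¹ * (y * Real.exp (-(ε*y^2))) := by
              rw [hexp]
              field_simp
  have h1 : Tendsto (fun y : ℝ => G₁ K₀ p y) atTop (nhds 0) := by
    apply squeeze_zero' hnn ?_ h2
    filter_upwards [hnn, eventually_ge_atTop (1:ℝ)] with y h1 hy
    nlinarith [mul_nonneg (by nlinarith : (0:ℝ) ≤ y^2 - 1) h1]
  refine ⟨h1, h2, fun c => ?_⟩
  have := h1.sub (h2.const_mul c)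
  simp only [mul_zero, sub_zero] at this
  convert this using 2 with y
  ring
end

section
/- For every constant K₀ > 0 and every real constant c: lim_{y→+∞} (1 − c·y²)·G₁(2,y)/y² = −2c/√π, and for every real p > 2, lim_{y→+∞} (1 − c·y²)·G₁(p,y)/y³ = −c·(p−2). In particular, for p ≥ 2, (1 − c·y²)·G₁(p,y) tends to −∞ as y → +∞ when c > 0 and to +∞ when c < 0. -/
open Real MeasureTheory Filter Set

theorem aux_div (a b : ℝ) : Real.exp a / b = 1 / (Real.exp (-a) * b) := by
  rw [Real.exp_neg, one_div, mul_inv, inv_inv, div_eq_mul_inv, mul_comm]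

theorem lemC (p y : ℝ) : Real.exp (-((p-1)*y^2)) * g p y
    = ∫ s in (0:ℝ)..y, Real.exp (-s^2 - (p-2)*y*s) := by
  rw [g, ← intervalIntegral.integral_const_mul]
  have : ∀ r : ℝ, Real.exp (-((p-1)*y^2)) * Real.exp (-r^2 + p*r*y)
      = Real.exp (-(y-r)^2 - (p-2)*y*(y-r)) := by
    intro r; rw [← Real.exp_add]; ring_nf
  rw [intervalIntegral.integral_congr (fun r _ => this r)]
  have := intervalIntegral.integral_comp_sub_left (a := (0:ℝ)) (b := y)
    (fun s => Real.exp (-s^2 - (p-2)*y*s)) y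
  simpa using this

theorem lemD (p : ℝ) {y : ℝ} (hy : 0 < y) :
    y * ∫ s in (0:ℝ)..y, Real.exp (-s^2 - (p-2)*y*s)
    = ∫ t in Ioi (0:ℝ), (Ioc (0:ℝ) (y^2)).indicator
        (fun t => Real.exp (-(t/y)^2 - (p-2)*t)) t := by
  have h1 : ∀ s : ℝ, Real.exp (-s^2 - (p-2)*y*s)
      = (fun t => Real.exp (-(t/y)^2 - (p-2)*t)) (y*s) := by
    intro s; simp only []
    rw [mul_div_cancel_left₀ s hy.ne']
    ring_nf
  rw [intervalIntegral.integral_congr (fun s _ => h1 s), ← smul_eq_mul,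
    intervalIntegral.smul_integral_comp_mul_left
      (fun t => Real.exp (-(t/y)^2 - (p-2)*t)) y, mul_zero]
  have h2 : y * y = y^2 := by ring
  rw [h2, intervalIntegral.integral_of_le (by positivity),
    ← integral_indicator measurableSet_Ioc, ← integral_indicator measurableSet_Ioi]
  congr 1
  ext t
  by_cases ht : t ∈ Ioc (0:ℝ) (y^2)
  · rw [indicator_of_mem ht, indicator_of_mem (Ioc_subset_Ioi_self ht),
      indicator_of_mem ht]
  · rw [indicator_of_notMem ht]
    by_cases ht2 : t ∈ Ioi (0:ℝ)
    · rw [indicator_of_mem ht2, indicator_of_notMem ht]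
    · rw [indicator_of_notMem ht2]

theorem expint {b : ℝ} (hb : 0 < b) : ∫ x in Ioi (0:ℝ), Real.exp (-(b*x)) = b⁻¹ := by
  have := integral_comp_mul_left_Ioi (fun x => Real.exp (-x)) 0 hb
  simp only [mul_zero] at this
  rw [this, integral_exp_neg_Ioi_zero, smul_eq_mul, mul_one]

theorem lemE {p : ℝ} (hp : 2 < p) :
    Tendsto (fun y : ℝ => ∫ t in Ioi (0:ℝ), (Ioc (0:ℝ) (y^2)).indicator
        (fun t => Real.exp (-(t/y)^2 - (p-2)*t)) t) atTop (nhds ((p-2)⁻¹)) := by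
  have hb : (0:ℝ) < p - 2 := by linarith
  have key : Tendsto (fun y : ℝ => ∫ t in Ioi (0:ℝ), (Ioc (0:ℝ) (y^2)).indicator
        (fun t => Real.exp (-(t/y)^2 - (p-2)*t)) t) atTop
      (nhds (∫ t in Ioi (0:ℝ), Real.exp (-((p-2)*t)))) := by
    apply tendsto_integral_filter_of_dominated_convergence
      (fun t => Real.exp (-((p-2)*t)))
    · filter_upwards with y
      exact ((Real.continuous_exp.comp (by fun_prop)).aestronglyMeasurable).indicator
        measurableSet_Ioc
    · filter_upwards with y
      filter_upwards with t
      by_cases ht : t ∈ Ioc (0:ℝ) (y^2)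
      · rw [indicator_of_mem ht]
        rw [Real.norm_eq_abs, Real.abs_exp]
        apply Real.exp_le_exp.2
        nlinarith [sq_nonneg (t/y)]
      · rw [indicator_of_notMem ht]
        simp [Real.exp_nonneg]
    · exact (exp_neg_integrableOn_Ioi 0 hb).congr_fun
        (fun x _ => by simp only [neg_mul]) measurableSet_Ioi
    · rw [ae_restrict_iff' measurableSet_Ioi]
      filter_upwards with t ht
      intro _
      have hev : ∀ᶠ y : ℝ in atTop, (Ioc (0:ℝ) (y^2)).indicator
          (fun t => Real.exp (-(t/y)^2 - (p-2)*t)) t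
          = Real.exp (-(t/y)^2 - (p-2)*t) := by
        filter_upwards [eventually_ge_atTop (t+1), eventually_ge_atTop 1] with y hy1 hy2
        apply indicator_of_mem
        constructor
        · exact ht
        · nlinarith [mem_Ioi.1 ht]
      apply Tendsto.congr' (hev.mono fun y h => h.symm)
      have h0 : Tendsto (fun y : ℝ => -(t/y)^2 - (p-2)*t) atTop
          (nhds (-(0:ℝ)^2 - (p-2)*t)) := by
        exact (((tendsto_const_nhds.div_atTop tendsto_id).pow 2).neg).sub_const _
      have := (Real.continuous_exp.tendsto _).comp h0
      simpa [neg_mul, Function.comp_def] using this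
  rw [expint hb] at key
  exact key

theorem lemF {a : ℝ} (ha : 0 < a) :
    Tendsto (fun y : ℝ => y * Real.exp (-(a*y^2))) atTop (nhds 0) := by
  apply squeeze_zero' (g := fun y => y * Real.exp (-y))
  · filter_upwards [eventually_ge_atTop (0:ℝ)] with y hy
    positivity
  · filter_upwards [eventually_ge_atTop (1/a), eventually_ge_atTop (0:ℝ)] with y h1 h0
    apply mul_le_mul_of_nonneg_left _ h0
    apply Real.exp_le_exp.2
    have h2 : 1 ≤ a * y := (div_le_iff₀' ha).1 h1
    nlinarith
  · simpa using tendsto_pow_mul_exp_neg_atTop_nhds_zero 1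

/-- `1/y² − c → −c` -/
theorem lemG (c : ℝ) : Tendsto (fun y : ℝ => 1/y^2 - c) atTop (nhds (0 - c)) := by
  apply Tendsto.sub_const
  have := tendsto_inv_atTop_zero.comp (tendsto_pow_atTop (two_ne_zero) : Tendsto (fun y : ℝ => y^2) atTop atTop)
  simpa [one_div, Function.comp_def] using this

/-- exp(−((p−1)y²)) → 0 for p > 1 -/
theorem lemH {p : ℝ} (hp : 1 < p) :
    Tendsto (fun y : ℝ => Real.exp (-((p-1)*y^2))) atTop (nhds 0) := by
  apply Real.tendsto_exp_atBot.comp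
  apply tendsto_neg_atTop_atBot.comp
  exact (tendsto_pow_atTop two_ne_zero).const_mul_atTop (by linarith)

/-- the y*exp(−(p−1)y²)*g limit for p > 2 -/
theorem lemI (K₀ : ℝ) {p : ℝ} (hp : 2 < p) :
    Tendsto (fun y : ℝ => y * (Real.exp (-((p-1)*y^2)) * (K₀ + g p y))) atTop
      (nhds (0 * K₀ + (p-2)⁻¹)) := by
  have heq : ∀ᶠ y : ℝ in atTop, y * (Real.exp (-((p-1)*y^2)) * (K₀ + g p y))
      = y * Real.exp (-((p-1)*y^2)) * K₀
        + ∫ t in Ioi (0:ℝ), (Ioc (0:ℝ) (y^2)).indicator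
            (fun t => Real.exp (-(t/y)^2 - (p-2)*t)) t := by
    filter_upwards [eventually_gt_atTop (0:ℝ)] with y hy
    rw [← lemD p hy, ← lemC p y]
    ring
  apply Tendsto.congr' (heq.mono fun y h => h.symm)
  exact ((lemF (by linarith : (0:ℝ) < p - 1)).mul_const K₀).add (lemE hp)

theorem stmt15 (K₀ c : ℝ) (hK₀ : 0 < K₀) :
    Tendsto (fun y : ℝ => (1 - c * y^2) * G₁ K₀ 2 y / y^2) atTop
      (nhds (-(2 * c) / Real.sqrt π)) ∧
    (∀ p : ℝ, 2 < p →
      Tendsto (fun y : ℝ => (1 - c * y^2) * G₁ K₀ p y / y^3) atTop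
        (nhds (-(c * (p - 2))))) ∧
    (∀ p : ℝ, 2 ≤ p →
      (0 < c → Tendsto (fun y : ℝ => (1 - c * y^2) * G₁ K₀ p y) atTop atBot) ∧
      (c < 0 → Tendsto (fun y : ℝ => (1 - c * y^2) * G₁ K₀ p y) atTop atTop)) := by
  have hG1 : ∀ p y : ℝ, G₁ K₀ p y = 1 / (Real.exp (-((p-1)*y^2)) * (K₀ + g p y)) := by
    intro p y; rw [G₁, aux_div]
  have hsqrtπ : (0:ℝ) < Real.sqrt π := Real.sqrt_pos.2 Real.pi_pos
  -- part 1
  have part1 : Tendsto (fun y : ℝ => (1 - c * y^2) * G₁ K₀ 2 y / y^2) atTop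
      (nhds (-(2 * c) / Real.sqrt π)) := by
    have heq : ∀ᶠ y : ℝ in atTop, (1 - c * y^2) * G₁ K₀ 2 y / y^2
        = (1/y^2 - c) * (1 / (Real.exp (-(((2:ℝ)-1)*y^2)) * (K₀ + g 2 y))) := by
      filter_upwards [eventually_gt_atTop (0:ℝ)] with y hy
      rw [hG1]
      have hE := Real.exp (-(((2:ℝ)-1)*y^2)) * (K₀ + g 2 y)
      set E := Real.exp (-(((2:ℝ)-1)*y^2)) * (K₀ + g 2 y) with hEdef
      by_cases h0 : E = 0
      · simp [h0]
      · field_simp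
    apply Tendsto.congr' (heq.mono fun y h => h.symm)
    have hD : Tendsto (fun y : ℝ => Real.exp (-(((2:ℝ)-1)*y^2)) * (K₀ + g 2 y)) atTop
        (nhds (0 * K₀ + Real.sqrt π / 2)) := by
      have heq2 : ∀ y : ℝ, Real.exp (-(((2:ℝ)-1)*y^2)) * (K₀ + g 2 y)
          = Real.exp (-(((2:ℝ)-1)*y^2)) * K₀ + ∫ u in (0:ℝ)..y, Real.exp (-u^2) := by
        intro y
        rw [mul_add]
        congr 1
        rw [lemC]
        apply intervalIntegral.integral_congr
        intro u _
        norm_num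
      simp only [heq2]
      apply Tendsto.add ((lemH (by norm_num)).mul_const K₀)
      have h := intervalIntegral_tendsto_integral_Ioi (0:ℝ)
        ((integrable_exp_neg_mul_sq one_pos).integrableOn) tendsto_id
      have e : ∫ x in Ioi (0:ℝ), Real.exp (-1 * x^2) = Real.sqrt π / 2 := by
        simpa using integral_gaussian_Ioi 1
      rw [e] at h
      simpa [neg_mul, one_mul] using h
    have hne : (0:ℝ) * K₀ + Real.sqrt π / 2 ≠ 0 := by
      rw [zero_mul, zero_add]
      positivity
    have := (lemG c).mul ((tendsto_const_nhds : Tendsto (fun _ : ℝ => (1:ℝ)) atTop (nhds 1)).div hD hne)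
    convert this using 2
    · rfl
    rw [zero_mul, zero_add, one_div, inv_div]
    ring
  -- part 2
  have part2 : ∀ p : ℝ, 2 < p →
      Tendsto (fun y : ℝ => (1 - c * y^2) * G₁ K₀ p y / y^3) atTop
        (nhds (-(c * (p - 2)))) := by
    intro p hp
    have heq : ∀ᶠ y : ℝ in atTop, (1 - c * y^2) * G₁ K₀ p y / y^3
        = (1/y^2 - c) * (1 / (y * (Real.exp (-((p-1)*y^2)) * (K₀ + g p y)))) := by
      filter_upwards [eventually_gt_atTop (0:ℝ)] with y hy
      rw [hG1]
      set E := Real.exp (-((p-1)*y^2)) * (K₀ + g p y) with hEdef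
      by_cases h0 : E = 0
      · simp [h0]
      · field_simp
    apply Tendsto.congr' (heq.mono fun y h => h.symm)
    have hne : (0:ℝ) * K₀ + (p-2)⁻¹ ≠ 0 := by
      rw [zero_mul, zero_add]
      exact (inv_pos.2 (by linarith)).ne'
    have := (lemG c).mul ((tendsto_const_nhds : Tendsto (fun _ : ℝ => (1:ℝ)) atTop (nhds 1)).div (lemI K₀ hp) hne)
    convert this using 2
    · rfl
    rw [zero_mul, zero_add, one_div, inv_inv]
    ring
  refine ⟨part1, part2, ?_⟩
  intro p hp
  rcases eq_or_lt_of_le hp with hp2 | hp2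
  · subst hp2
    have heq : ∀ᶠ y : ℝ in atTop, y^2 * ((1 - c * y^2) * G₁ K₀ 2 y / y^2)
        = (1 - c * y^2) * G₁ K₀ 2 y := by
      filter_upwards [eventually_gt_atTop (0:ℝ)] with y hy
      rw [mul_comm, div_mul_cancel₀ _ (by positivity : y^2 ≠ 0)]
    have hyT : Tendsto (fun y : ℝ => y^2) atTop atTop := tendsto_pow_atTop two_ne_zero
    constructor
    · intro hc
      have hL : -(2 * c) / Real.sqrt π < 0 :=
        div_neg_of_neg_of_pos (by linarith) hsqrtπ
      exact Tendsto.congr' heq (hyT.atTop_mul_neg hL part1)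
    · intro hc
      have hL : 0 < -(2 * c) / Real.sqrt π :=
        div_pos (by linarith) hsqrtπ
      exact Tendsto.congr' heq (hyT.atTop_mul_pos hL part1)
  · have heq : ∀ᶠ y : ℝ in atTop, y^3 * ((1 - c * y^2) * G₁ K₀ p y / y^3)
        = (1 - c * y^2) * G₁ K₀ p y := by
      filter_upwards [eventually_gt_atTop (0:ℝ)] with y hy
      rw [mul_comm, div_mul_cancel₀ _ (by positivity : y^3 ≠ 0)]
    have hyT : Tendsto (fun y : ℝ => y^3) atTop atTop :=
      tendsto_pow_atTop (by norm_num)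
    constructor
    · intro hc
      have hL : -(c * (p - 2)) < 0 := by nlinarith
      exact Tendsto.congr' heq (hyT.atTop_mul_neg hL (part2 p hp2))
    · intro hc
      have hL : 0 < -(c * (p - 2)) := by nlinarith
      exact Tendsto.congr' heq (hyT.atTop_mul_pos hL (part2 p hp2))
end
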